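/- Let d ≠ e be positive integers, s, t ∈ [0,1/2], and γ ∈ ℝ. Set δ := min{s/d, t/e} and Δ := max{s/d, t/e}, and define w : ℝ → ℝ by w(y) := 2δ if |y| ≤ Δ−δ, w(y) := Δ+δ−|y| if Δ−δ < |y| ≤ Δ+δ, and w(y) := 0 otherwise. Then λ₁( A(d,s) ∩ A(e,t) ) = gcd(d,e) · ∑_{c ∈ ℤ} w( ( c − γ·(d−e)/gcd(d,e) ) / lcm(d,e) ). -/

import Mathlib

/-!
Lifted to `ℝ`, `A(d,s)` is the union of the intervals `I_j` of radius `s/d` around `(γ+j)/d`,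
which overlap only in endpoints because `s ≤ 1/2`; so the measure of `A(d,s) ∩ A(e,t)` is
`∑_{j,k} |I_j ∩ J_k ∩ (0,1]|`. Write `d = gm`, `e = gn` with `g = gcd(d,e)` and pick
`Xn - Ym = 1`. The substitution `(j,k) = (aX - bm, aY - bn)` is a bijection of `ℤ²` which
translates `I_j ∩ J_k` by `-b/g`, while the offset of centres `(γ+aX)/d - (γ+aY)/e` equals
`(a - γ(d-e)/g)/lcm(d,e)` and depends on `a` alone. The intervals `(b/g, b/g+1]`, `b ∈ ℤ`, cover
`ℝ` exactly `g` times, so the sum over `b` is `g |I_{aX} ∩ J_{aY}|`, and the overlap of two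
intervals is the tent function `w` of the offset of their centres.
-/

open MeasureTheory

/-- The one-dimensional set `A(d,t) = {α ∈ 𝕋 : ‖dα - γ‖ ≤ t}`. -/
noncomputable def ApproxSet1 (γ : ℝ) (d : ℕ) (t : ℝ) : Set UnitAddCircle :=
  {α | ‖d • α - (γ : UnitAddCircle)‖ ≤ t}

open Set Metric

theorem abs_sub_round_le_iff {x u : ℝ} : |x - round x| ≤ u ↔ ∃ j : ℤ, |x - j| ≤ u :=
  ⟨fun h => ⟨round x, h⟩, fun ⟨j, hj⟩ => (round_le x j).trans hj⟩

theorem coe_preimage_approxSet1 (γ : ℝ) {D : ℕ} (hD : 0 < D) (u : ℝ) :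
    ((↑) : ℝ → UnitAddCircle) ⁻¹' ApproxSet1 γ D u =
      ⋃ j : ℤ, closedBall ((γ + j) / D) (u / D) := by
  have hD' : (0 : ℝ) < D := Nat.cast_pos.mpr hD
  ext x
  have hball (j : ℤ) : |x - (γ + j) / D| ≤ u / D ↔ |D * x - γ - j| ≤ u := by
    rw [show D * x - γ - j = D * (x - (γ + j) / D) by field_simp; ring, abs_mul,
      abs_of_pos hD', le_div_iff₀' hD']
  simp only [ApproxSet1, mem_preimage, mem_ofPred_eq, mem_iUnion, mem_closedBall, Real.dist_eq,
    hball, ← AddCircle.coe_nsmul, ← AddCircle.coe_sub, nsmul_eq_mul, UnitAddCircle.norm_eq,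
    abs_sub_round_le_iff]

theorem isClosed_approxSet1 (γ : ℝ) (D : ℕ) (u : ℝ) : IsClosed (ApproxSet1 γ D u) :=
  isClosed_le ((continuous_nsmul D).sub continuous_const).norm continuous_const

theorem tsum_measure_inter_Ioc_add_intCast (μ : Measure ℝ) {K : Set ℝ} (hK : MeasurableSet K)
    (a : ℝ) : ∑' n : ℤ, μ (K ∩ Ioc (a + n) (a + n + 1)) = μ K := by
  rw [← measure_iUnion (fun _ _ h => ((pairwise_disjoint_Ioc_add_intCast a) h).mono
      inter_subset_right inter_subset_right) fun _ => hK.inter measurableSet_Ioc,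
    ← inter_iUnion, iUnion_Ioc_add_intCast, inter_univ]

theorem tsum_measure_inter_Ioc_div (μ : Measure ℝ) {K : Set ℝ} (hK : MeasurableSet K)
    (g : ℕ) [NeZero g] : ∑' b : ℤ, μ (K ∩ Ioc (b / g) (b / g + 1)) = g * μ K := by
  have hdiv (q : ℤ) (r : Fin g) : ((q * g + r : ℤ) : ℝ) / g = r / g + q := by
    push_cast
    field_simp [NeZero.ne (g : ℝ)]
    ring
  rw [← (Int.divModEquiv g).symm.tsum_eq, ENNReal.tsum_prod', ENNReal.tsum_comm, tsum_fintype]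
  simp only [Int.divModEquiv_symm_apply, hdiv, tsum_measure_inter_Ioc_add_intCast μ hK,
    Finset.sum_const, Finset.card_univ, Fintype.card_fin, nsmul_eq_mul]

theorem volume_closedBall_inter_closedBall (c₁ c₂ r₁ r₂ : ℝ) :
    volume (closedBall c₁ r₁ ∩ closedBall c₂ r₂) =
      ENNReal.ofReal (min (2 * min r₁ r₂) (r₁ + r₂ - |c₁ - c₂|)) := by
  rw [Real.closedBall_eq_Icc, Real.closedBall_eq_Icc, Icc_inter_Icc, Real.volume_Icc]
  congr 1
  simp only [min_def, max_def, abs_eq_max_neg]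
  split_ifs <;> linarith

theorem volume_closedBall_inter_closedBall_eq_zero {c₁ c₂ r : ℝ} (h : 2 * r ≤ |c₁ - c₂|) :
    volume (closedBall c₁ r ∩ closedBall c₂ r) = 0 := by
  rw [volume_closedBall_inter_closedBall, ENNReal.ofReal_eq_zero, min_self]
  exact min_le_of_right_le (by linarith)

theorem pairwise_aedisjoint_closedBall_div (γ : ℝ) {D : ℕ} (hD : 0 < D) {u : ℝ}
    (hu : u ≤ 1 / 2) :
    Pairwise (Function.onFun (AEDisjoint volume) fun j : ℤ =>
      closedBall ((γ + j) / D) (u / D)) := by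
  intro i j hij
  have hD' : (0 : ℝ) < D := Nat.cast_pos.mpr hD
  apply volume_closedBall_inter_closedBall_eq_zero
  have hij' : (1 : ℝ) ≤ |(i : ℝ) - j| := by exact_mod_cast Int.one_le_abs (sub_ne_zero.mpr hij)
  rw [← sub_div, add_sub_add_left_eq_sub, abs_div, abs_of_pos hD', mul_div_assoc']
  gcongr
  linarith

theorem tsum_volume_preimage_add_div_inter_Ioc {K : Set ℝ} (hK : MeasurableSet K) (g : ℕ)
    [NeZero g] : ∑' b : ℤ, volume ((· + (b : ℝ) / g) ⁻¹' K ∩ Ioc 0 1) = g * volume K := by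
  rw [← tsum_measure_inter_Ioc_div volume hK g]
  congr! 2 with b
  rw [show Ioc (0 : ℝ) 1 = (· + (b : ℝ) / g) ⁻¹' Ioc (b / g) (b / g + 1) by simp,
    ← preimage_inter, measure_preimage_add_right]

def bezoutEquiv {X Y m n : ℤ} (h : X * n - Y * m = 1) : ℤ × ℤ ≃ ℤ × ℤ where
  toFun p := (p.1 * X - p.2 * m, p.1 * Y - p.2 * n)
  invFun q := (n * q.1 - m * q.2, Y * q.1 - X * q.2)
  left_inv := fun ⟨a, b⟩ => Prod.ext (by linear_combination a * h) (by linear_combination b * h)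
  right_inv := fun ⟨j, k⟩ => Prod.ext (by linear_combination j * h) (by linear_combination k * h)

theorem volume_approxSet1_inter_eq_tsum (γ : ℝ) {d e : ℕ} (hd : 0 < d) (he : 0 < e) {s t : ℝ}
    (hs : s ≤ 1 / 2) (ht : t ≤ 1 / 2) :
    volume (ApproxSet1 γ d s ∩ ApproxSet1 γ e t) = ∑' p : ℤ × ℤ, volume
      (closedBall ((γ + p.1) / d) (s / d) ∩ closedBall ((γ + p.2) / e) (t / e) ∩ Ioc 0 1) := by
  have hpre : ((↑) : ℝ → UnitAddCircle) ⁻¹' (ApproxSet1 γ d s ∩ ApproxSet1 γ e t) =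
      ⋃ p : ℤ × ℤ, closedBall ((γ + p.1) / d) (s / d) ∩ closedBall ((γ + p.2) / e) (t / e) := by
    rw [preimage_inter, coe_preimage_approxSet1 γ hd, coe_preimage_approxSet1 γ he,
      iUnion_inter_iUnion, iUnion_prod']
  have hdisj : Pairwise (Function.onFun (AEDisjoint volume) fun p : ℤ × ℤ =>
      closedBall ((γ + p.1) / d) (s / d) ∩ closedBall ((γ + p.2) / e) (t / e) ∩ Ioc 0 1) := by
    rintro ⟨j, k⟩ ⟨j', k'⟩ hne
    obtain hj | hk : j ≠ j' ∨ k ≠ k' := by grind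
    · exact (pairwise_aedisjoint_closedBall_div γ hd hs hj).mono
        (inter_subset_left.trans inter_subset_left) (inter_subset_left.trans inter_subset_left)
    · exact (pairwise_aedisjoint_closedBall_div γ he ht hk).mono
        (inter_subset_left.trans inter_subset_right) (inter_subset_left.trans inter_subset_right)
  rw [AddCircle.add_projection_respects_measure 1 0
      ((isClosed_approxSet1 γ d s).inter (isClosed_approxSet1 γ e t)).measurableSet,
    zero_add, hpre, iUnion_inter, measure_iUnion₀ hdisj fun _ =>
      ((measurableSet_closedBall.inter measurableSet_closedBall).inter
        measurableSet_Ioc).nullMeasurableSet]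

theorem tsum_volume_closedBall_inter_Ioc_eq_mul_tsum {d e m n g : ℕ} [NeZero g]
    (hdm : d = m * g) (hen : e = n * g) (hd : 0 < d) (he : 0 < e) {X Y : ℤ}
    (hXY : X * n - Y * m = 1) (γ r₁ r₂ : ℝ) :
    ∑' p : ℤ × ℤ, volume (closedBall ((γ + p.1) / d) r₁ ∩ closedBall ((γ + p.2) / e) r₂ ∩ Ioc 0 1)
      = g * ∑' a : ℤ,
        volume (closedBall ((γ + a * X) / d) r₁ ∩ closedBall ((γ + a * Y) / e) r₂) := by
  subst hdm hen
  have hm : (m : ℝ) ≠ 0 := Nat.cast_ne_zero.mpr (by rintro rfl; omega)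
  have hn : (n : ℝ) ≠ 0 := Nat.cast_ne_zero.mpr (by rintro rfl; omega)
  have hshift (a b : ℤ) :
      closedBall ((γ + ↑(a * X - b * m)) / ↑(m * g)) r₁ ∩
        closedBall ((γ + ↑(a * Y - b * n)) / ↑(n * g)) r₂ =
      (· + (b : ℝ) / g) ⁻¹' (closedBall ((γ + a * X) / ↑(m * g)) r₁ ∩
        closedBall ((γ + a * Y) / ↑(n * g)) r₂) := by
    simp only [preimage_inter, preimage_add_right_closedBall]
    congr 2 <;> push_cast <;> field_simp <;> ring
  rw [← (bezoutEquiv hXY).tsum_eq, ENNReal.tsum_prod', ← ENNReal.tsum_mul_left]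
  simp only [bezoutEquiv, Equiv.coe_fn_mk, hshift]
  exact tsum_congr fun a => tsum_volume_preimage_add_div_inter_Ioc
    (measurableSet_closedBall.inter measurableSet_closedBall) g

theorem volume_approxSet1_inter (γ : ℝ) {d e : ℕ} (hd : 0 < d) (he : 0 < e) {s t : ℝ}
    (hs : s ≤ 1 / 2) (ht : t ≤ 1 / 2) :
    volume (ApproxSet1 γ d s ∩ ApproxSet1 γ e t) = Nat.gcd d e * ∑' c : ℤ,
      ENNReal.ofReal (min (2 * min (s / d) (t / e)) (s / d + t / e -
        |((c : ℝ) - γ * ((d : ℝ) - e) / Nat.gcd d e) / Nat.lcm d e|)) := by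
  obtain ⟨m, n, hmn, hdm, hen⟩ := Nat.exists_coprime d e
  set g := Nat.gcd d e
  have : NeZero g := ⟨(Nat.gcd_pos_of_pos_left e hd).ne'⟩
  obtain ⟨u, v, huv⟩ := Nat.isCoprime_iff_coprime.mpr hmn
  have hXY : v * n - (-u) * m = 1 := by linear_combination huv
  have hg : (g : ℝ) ≠ 0 := NeZero.ne _
  have hm : (m : ℝ) ≠ 0 := Nat.cast_ne_zero.mpr (by rintro rfl; omega)
  have hn : (n : ℝ) ≠ 0 := Nat.cast_ne_zero.mpr (by rintro rfl; omega)
  have hd' : (d : ℝ) = m * g := by exact_mod_cast hdm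
  have he' : (e : ℝ) = n * g := by exact_mod_cast hen
  have hL : (Nat.lcm d e : ℝ) = m * n * g := by
    have : (g : ℝ) * Nat.lcm d e = d * e := by exact_mod_cast Nat.gcd_mul_lcm d e
    rw [hd', he'] at this
    field_simp at this ⊢
    linarith
  have hcenter (a : ℤ) : (γ + a * v) / d - (γ + a * ((-u : ℤ) : ℝ)) / e =
      (a - γ * ((d : ℝ) - e) / g) / Nat.lcm d e := by
    rw [hd', he', hL]
    push_cast
    field_simp
    linear_combination (a : ℝ) * (by exact_mod_cast huv : (u : ℝ) * m + v * n = 1)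
  rw [volume_approxSet1_inter_eq_tsum γ hd he hs ht,
    tsum_volume_closedBall_inter_Ioc_eq_mul_tsum hdm hen hd he hXY]
  simp only [volume_closedBall_inter_closedBall, hcenter]

theorem tent_ite_eq_max_min {δ Δ : ℝ} (hδ : 0 ≤ δ) (y : ℝ) :
    (if |y| ≤ Δ - δ then 2 * δ else if |y| ≤ Δ + δ then Δ + δ - |y| else 0) =
      max (min (2 * δ) (Δ + δ - |y|)) 0 := by
  split_ifs
  · rw [min_eq_left (by linarith), max_eq_left (by linarith)]
  · rw [min_eq_right (by linarith), max_eq_left (by linarith)]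
  · rw [max_eq_right (min_le_of_right_le (by linarith))]

theorem one_dim_overlap_formula_general
    (d e : ℕ) (hd : 0 < d) (he : 0 < e)
    (s t : ℝ) (hs : s ∈ Set.Icc (0:ℝ) (1/2)) (ht : t ∈ Set.Icc (0:ℝ) (1/2))
    (γ : ℝ)
    (δ' Δ : ℝ) (hδ' : δ' = min (s / d) (t / e)) (hΔ : Δ = max (s / d) (t / e))
    (w : ℝ → ℝ)
    (hw : ∀ y : ℝ, w y = if |y| ≤ Δ - δ' then 2 * δ'
      else if |y| ≤ Δ + δ' then Δ + δ' - |y| else 0) :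
    (volume (ApproxSet1 γ d s ∩ ApproxSet1 γ e t)).toReal
      = (Nat.gcd d e : ℝ) * ∑' c : ℤ,
          w (((c : ℝ) - γ * ((d : ℝ) - (e : ℝ)) / (Nat.gcd d e : ℝ))
              / (Nat.lcm d e : ℝ)) := by
  subst hδ' hΔ
  have hδ : 0 ≤ min (s / d) (t / e) :=
    le_min (div_nonneg hs.1 d.cast_nonneg) (div_nonneg ht.1 e.cast_nonneg)
  have hw' (y : ℝ) :
      w y = (ENNReal.ofReal (min (2 * min (s / d) (t / e)) (s / d + t / e - |y|))).toReal := by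
    rw [hw, tent_ite_eq_max_min hδ y, max_add_min, ENNReal.toReal_ofReal']
  rw [volume_approxSet1_inter γ hd he hs.2 ht.2, ENNReal.toReal_mul,
    ENNReal.tsum_toReal_eq fun _ => ENNReal.ofReal_ne_top]
  simp only [hw', ENNReal.toReal_natCast]

/-- Exact overlap formula in dimension one in terms of the tent-like weight
function `w`. -/
theorem one_dim_overlap_formula
    (d e : ℕ) (hd : 0 < d) (he : 0 < e) (hde : d ≠ e)
    (s t : ℝ) (hs : s ∈ Set.Icc (0:ℝ) (1/2)) (ht : t ∈ Set.Icc (0:ℝ) (1/2))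
    (γ : ℝ)
    (δ' Δ : ℝ) (hδ' : δ' = min (s / d) (t / e)) (hΔ : Δ = max (s / d) (t / e))
    (w : ℝ → ℝ)
    (hw : ∀ y : ℝ, w y = if |y| ≤ Δ - δ' then 2 * δ'
      else if |y| ≤ Δ + δ' then Δ + δ' - |y| else 0) :
    (volume (ApproxSet1 γ d s ∩ ApproxSet1 γ e t)).toReal
      = (Nat.gcd d e : ℝ) * ∑' c : ℤ,
          w (((c : ℝ) - γ * ((d : ℝ) - (e : ℝ)) / (Nat.gcd d e : ℝ))
              / (Nat.lcm d e : ℝ)) :=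
  one_dim_overlap_formula_general d e hd he s t hs ht γ δ' Δ hδ' hΔ w hw
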